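/- Let (Ω, ℱ, 𝒫) be a probability space, (ℱₙ)_{n≥1} a filtration, x an L₂-bounded martingale with x₀ = 0, and let (wₙ)_{n≥1} be a predictable sequence (wₙ is ℱₙ₋₁-measurable) of positive bounded random variables such that (wₙ^{1−2/p})_{n} is nonincreasing for a fixed 0 < p ≤ 2. Then for every k ≥ 1: E[ w_{k+1}^{1−2/p} · x_k² ] ≤ ∑_{n=1}^{k} E[ wₙ^{1−2/p} · (xₙ − xₙ₋₁)² ]. -/

import Mathlib

/-!
With `v = w ^ (1 - 2 / p)`, the weight `v (n + 1)` is `ℱ n`-measurable, so the cross term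
`E[v (n + 1) xₙ (xₙ₊₁ - xₙ)]` vanishes and
`E[v (n + 1) xₙ₊₁²] = E[v (n + 1) xₙ²] + E[v (n + 1) (xₙ₊₁ - xₙ)²]`.
Since `v` is nonincreasing, `E[v (n + 2) xₙ₊₁²] ≤ E[v (n + 1) xₙ₊₁²]`, and the estimate follows
by induction on `k`, starting from `x₀ = 0`.
-/

open MeasureTheory Finset

namespace MeasureTheory.Martingale

variable {Ω ι : Type*} {m : MeasurableSpace Ω} {μ : Measure Ω} [IsFiniteMeasure μ] [Preorder ι]
  {ℱ : Filtration ι m} {f : ι → Ω → ℝ} {i j : ι}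

theorem integral_mul_sub_eq_zero (hf : Martingale f ℱ μ) (hij : i ≤ j) {g : Ω → ℝ}
    (hg : StronglyMeasurable[ℱ i] g) (hgf : Integrable (g * (f j - f i)) μ) :
    ∫ ω, (g * (f j - f i)) ω ∂μ = 0 := by
  have hcond : μ[f j - f i | ℱ i] =ᵐ[μ] 0 := by
    filter_upwards [condExp_sub (hf.integrable j) (hf.integrable i) (ℱ i), hf.condExp_ae_eq hij,
      hf.condExp_ae_eq (le_refl i)] with ω hsub hj hi
    simp [hsub, hj, hi]
  rw [← integral_condExp (ℱ.le i)]
  refine (integral_congr_ae ?_).trans (integral_zero Ω ℝ)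
  filter_upwards [condExp_mul_of_stronglyMeasurable_left hg hgf
    ((hf.integrable j).sub (hf.integrable i)), hcond] with ω hmul hzero
  simp [hmul, hzero]

theorem integral_mul_sq_eq_add_integral_mul_sq_sub (hf : Martingale f ℱ μ) (hij : i ≤ j)
    {v : Ω → ℝ} (hv : StronglyMeasurable[ℱ i] v)
    (hi : Integrable (fun ω => v ω * f i ω ^ 2) μ) (hj : Integrable (fun ω => v ω * f j ω ^ 2) μ)
    (hd : Integrable (fun ω => v ω * (f j ω - f i ω) ^ 2) μ) :
    ∫ ω, v ω * f j ω ^ 2 ∂μ =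
      ∫ ω, v ω * f i ω ^ 2 ∂μ + ∫ ω, v ω * (f j ω - f i ω) ^ 2 ∂μ := by
  have polarization : v * f i * (f j - f i) = fun ω =>
      (v ω * f j ω ^ 2 - v ω * f i ω ^ 2 - v ω * (f j ω - f i ω) ^ 2) / 2 := by
    ext ω
    simp only [Pi.mul_apply, Pi.sub_apply]
    ring
  have hji : Integrable (fun ω => v ω * f j ω ^ 2 - v ω * f i ω ^ 2) μ := hj.sub hi
  have hcross := hf.integral_mul_sub_eq_zero hij (hv.mul (hf.stronglyAdapted i))
    (polarization ▸ (hji.sub hd).div_const 2)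
  rw [polarization, integral_div, integral_sub hji hd, integral_sub hj hi] at hcross
  linarith

theorem integral_mul_sq_le_sum_integral_mul_sq_sub {f : ℕ → Ω → ℝ} {ℱ : Filtration ℕ m}
    (hf : Martingale f ℱ μ) (hf0 : f 0 = 0) {v : ℕ → Ω → ℝ}
    (hv : ∀ n, StronglyMeasurable[ℱ n] (v (n + 1))) (hv_anti : ∀ n ω, v (n + 1) ω ≤ v n ω)
    (hint_pred : ∀ n, Integrable (fun ω => v (n + 1) ω * f n ω ^ 2) μ)
    (hint : ∀ n, Integrable (fun ω => v n ω * f n ω ^ 2) μ)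
    (hint_sub : ∀ n, Integrable (fun ω => v (n + 1) ω * (f (n + 1) ω - f n ω) ^ 2) μ) (k : ℕ) :
    ∫ ω, v (k + 1) ω * f k ω ^ 2 ∂μ ≤
      ∑ n ∈ Icc 1 k, ∫ ω, v n ω * (f n ω - f (n - 1) ω) ^ 2 ∂μ := by
  induction k with
  | zero => simp [hf0]
  | succ n ih =>
    calc ∫ ω, v (n + 2) ω * f (n + 1) ω ^ 2 ∂μ
        ≤ ∫ ω, v (n + 1) ω * f (n + 1) ω ^ 2 ∂μ :=
          integral_mono (hint_pred (n + 1)) (hint (n + 1)) fun ω =>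
            mul_le_mul_of_nonneg_right (hv_anti (n + 1) ω) (sq_nonneg _)
      _ = ∫ ω, v (n + 1) ω * f n ω ^ 2 ∂μ + ∫ ω, v (n + 1) ω * (f (n + 1) ω - f n ω) ^ 2 ∂μ :=
          hf.integral_mul_sq_eq_add_integral_mul_sq_sub n.le_succ (hv n) (hint_pred n)
            (hint (n + 1)) (hint_sub n)
      _ ≤ _ := by
          rw [sum_Icc_succ_top (by omega), Nat.add_sub_cancel]
          exact add_le_add_left ih _

end MeasureTheory.Martingale

theorem weighted_estimate_general
    {Ω : Type*} {m : MeasurableSpace Ω} {μ : Measure Ω} [IsProbabilityMeasure μ]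
    (ℱ : Filtration ℕ m) (x : ℕ → Ω → ℝ) (w : ℕ → Ω → ℝ)
    (hx : Martingale x ℱ μ) (hx0 : x 0 = 0)
    (p : ℝ)
    (hw_pred : ∀ n : ℕ, 1 ≤ n → StronglyMeasurable[ℱ (n - 1)] (w n))
    (hw_mono : ∀ n ω, w (n + 1) ω ^ (1 - 2 / p) ≤ w n ω ^ (1 - 2 / p))
    (hint : ∀ n j : ℕ, Integrable (fun ω => w n ω ^ (1 - 2 / p) * (x j ω) ^ 2) μ)
    (hint' : ∀ n : ℕ, Integrable (fun ω => w n ω ^ (1 - 2 / p) * (x n ω - x (n - 1) ω) ^ 2) μ)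
    (k : ℕ) :
    (∫ ω, w (k + 1) ω ^ (1 - 2 / p) * (x k ω) ^ 2 ∂μ) ≤
      ∑ n ∈ Finset.Icc 1 k, ∫ ω, w n ω ^ (1 - 2 / p) * (x n ω - x (n - 1) ω) ^ 2 ∂μ :=
  hx.integral_mul_sq_le_sum_integral_mul_sq_sub hx0
    (fun n => ((hw_pred (n + 1) n.succ_pos).measurable.pow_const _).stronglyMeasurable)
    hw_mono (fun n => hint (n + 1) n) (fun n => hint n n) (fun n => hint' (n + 1)) k

theorem weighted_estimate
    {Ω : Type*} {m : MeasurableSpace Ω} {μ : Measure Ω} [IsProbabilityMeasure μ]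
    (ℱ : Filtration ℕ m) (x : ℕ → Ω → ℝ) (w : ℕ → Ω → ℝ)
    (hx : Martingale x ℱ μ) (hx2 : ∀ n, MemLp (x n) 2 μ) (hx0 : x 0 = 0)
    (p : ℝ) (hp0 : 0 < p) (hp2 : p ≤ 2)
    (hw_pred : ∀ n : ℕ, 1 ≤ n → StronglyMeasurable[ℱ (n - 1)] (w n))
    (hw_pos : ∀ n ω, 0 < w n ω)
    (hw_bdd : ∀ n : ℕ, ∃ C : ℝ, ∀ ω, w n ω ≤ C)
    (hw_mono : ∀ n ω, w (n + 1) ω ^ (1 - 2 / p) ≤ w n ω ^ (1 - 2 / p))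
    (hint : ∀ n j : ℕ, Integrable (fun ω => w n ω ^ (1 - 2 / p) * (x j ω) ^ 2) μ)
    (hint' : ∀ n : ℕ, Integrable (fun ω => w n ω ^ (1 - 2 / p) * (x n ω - x (n - 1) ω) ^ 2) μ)
    (k : ℕ) (hk : 1 ≤ k) :
    (∫ ω, w (k + 1) ω ^ (1 - 2 / p) * (x k ω) ^ 2 ∂μ) ≤
      ∑ n ∈ Finset.Icc 1 k, ∫ ω, w n ω ^ (1 - 2 / p) * (x n ω - x (n - 1) ω) ^ 2 ∂μ :=
  weighted_estimate_general ℱ x w hx hx0 p hw_pred hw_mono hint hint' k
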